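/- Let d be a positive integer, α ∈ (0,2), s ∈ [0,α), and let β satisfy α/(d − s + α) < β < α/d. Let μ be a nonzero finite Borel measure on ℝ^d with compact support S satisfying condition (F2)-s with constant C̲. Let c₁ > 0 and let D : ℝ^d → ℝ be bounded on every bounded subset of ℝ^d and satisfy D(u) ≤ c₁/(1 + |u|^{d+α}) for all |u| ≥ 2. Then there exists Λ₀ > 0 such that for every k ≥ Λ₀ and every (t,x) with t > 0 and x ∈ ℝ^d: the map τ ↦ h_k(τ,x) is differentiable at t, and ∂_t h_k(t,x) − k · t^{-1/β − 1}(1 + t^{-s/α}) ∫_{ℝ^d} D(t^{-1/α}(x − y)) dμ(y) + h_k(t,x)^{1+β} ≥ 0. -/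

import Mathlib

/-!
Differentiating under the integral, `∂ₜ w_t(z) = t⁻¹ w_t(z) E`, where `E = t ∂ₜ log w_t(z)` is an
explicit bounded function of `σ = t^{-s/α}` and `ρ = t^{-1/α}|z|`. As `ρ → ∞`, `E` tends to at
least `(d+α)/α - 1/β - s/α`, which is positive because `β > α/(d-s+α)`; thanks to the logarithm in
`W`, beyond some radius `R₀` the term `W(ρ) E` even dominates `c₁/(1+ρ^{d+α}) ≥ D`. Only the
near region `N = {y : t^{-1/α}|x-y| ≤ R₀}` contributes negatively, at most
`k t⁻¹ a C μ(N)` for a constant `C`, where `a = t^{-1/β}(1+t^{-s/α})`. There `W ≥ w > 0`, so `∫ W ≥ w μ(N)`, and if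
`μ(N) > 0` then `N` meets the support and (F2) on a ball of radius `min(t^{1/α}, 1)` gives
`(1+t^{-s/α}) ∫ W ≥ C̲ w` uniformly in `t`. Since `h_k = k a ∫ W` and
`(k a ∫ W)^β = k^β t⁻¹ ((1+t^{-s/α}) ∫ W)^β`, the reaction term `h_k^{1+β}` absorbs the negative
contribution as soon as `k` is large.
-/

open MeasureTheory Metric Set Filter Topology

/-- The profile function `W(r) = log(e + r²)/(1 + r^{d+α})`. -/
noncomputable def Wfn (d : ℕ) (α r : ℝ) : ℝ :=
  Real.log (Real.exp 1 + r ^ 2) / (1 + r ^ ((d : ℝ) + α))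

/-- `w_t(x) = t^{-1/β}(1 + t^{-s/α}) W(t^{-1/α}|x|)`. -/
noncomputable def wfn (d : ℕ) (α β s t : ℝ) (x : EuclideanSpace ℝ (Fin d)) : ℝ :=
  t ^ (-(1:ℝ)/β) * (1 + t ^ (-s/α)) * Wfn d α (t ^ (-(1:ℝ)/α) * ‖x‖)

/-- `h_k(t,x) = k ∫ w_t(x - y) dμ(y)`. -/
noncomputable def hfn (d : ℕ) (α β s : ℝ) (μ : Measure (EuclideanSpace ℝ (Fin d)))
    (k t : ℝ) (x : EuclideanSpace ℝ (Fin d)) : ℝ :=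
  k * ∫ y, wfn d α β s t (x - y) ∂μ

/-- `S` is the closed support of `μ`. -/
def IsSupportOf (d : ℕ) (μ : Measure (EuclideanSpace ℝ (Fin d)))
    (S : Set (EuclideanSpace ℝ (Fin d))) : Prop :=
  IsClosed S ∧ μ Sᶜ = 0 ∧ ∀ x ∈ S, ∀ r : ℝ, 0 < r → 0 < μ (ball x r)

/-- Condition (F2)-s with constant `Cund` on the set `S`. -/
def IsF2 (d : ℕ) (μ : Measure (EuclideanSpace ℝ (Fin d)))
    (S : Set (EuclideanSpace ℝ (Fin d))) (Cund s : ℝ) : Prop :=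
  ∀ x ∈ S, ∀ r : ℝ, 0 < r → r ≤ 1 →
    ENNReal.ofReal (Cund * r ^ s) ≤ μ (closedBall x r)

-- `e` is the elasticity `t f'(t) / f(t)` of `f` at `t`, stated without dividing by `f t`.
def HasElasticityAt (f : ℝ → ℝ) (e t : ℝ) : Prop :=
  HasDerivAt f (t⁻¹ * f t * e) t

namespace HasElasticityAt

variable {f g : ℝ → ℝ} {e e' t : ℝ}

lemma congr_of_eventuallyEq (hf : HasElasticityAt f e t) (hfg : g =ᶠ[𝓝 t] f) :
    HasElasticityAt g e t := by
  unfold HasElasticityAt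
  rw [hfg.eq_of_nhds]
  exact HasDerivAt.congr_of_eventuallyEq hf hfg

lemma mul (hf : HasElasticityAt f e t) (hg : HasElasticityAt g e' t) :
    HasElasticityAt (fun τ => f τ * g τ) (e + e') t :=
  (HasDerivAt.mul hf hg).congr_deriv (by ring)

lemma log (hf : HasElasticityAt f e t) (hpos : 0 < f t) (hlog : Real.log (f t) ≠ 0) :
    HasElasticityAt (fun τ => Real.log (f τ)) (e / Real.log (f t)) t :=
  (HasDerivAt.log hf hpos.ne').congr_deriv (by field_simp)

lemma inv (hf : HasElasticityAt f e t) (hne : f t ≠ 0) :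
    HasElasticityAt (fun τ => (f τ)⁻¹) (-e) t :=
  (HasDerivAt.inv hf hne).congr_deriv (by field_simp)

end HasElasticityAt

lemma hasElasticityAt_rpow {t : ℝ} (ht : 0 < t) (q : ℝ) :
    HasElasticityAt (fun τ => τ ^ q) q t :=
  (Real.hasDerivAt_rpow_const (p := q) (Or.inl ht.ne')).congr_deriv (by
    rw [Real.rpow_sub ht, Real.rpow_one]; field_simp)

lemma hasElasticityAt_const_add_mul_rpow {a b t : ℝ} (ht : 0 < t) (q : ℝ)
    (hne : a + b * t ^ q ≠ 0) :
    HasElasticityAt (fun τ => a + b * τ ^ q) (q * (b * t ^ q / (a + b * t ^ q))) t :=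
  (HasDerivAt.const_add a (HasDerivAt.const_mul b (hasElasticityAt_rpow ht q))).congr_deriv (by
    field_simp)

section Wfn

variable {d : ℕ} {α ρ : ℝ}

lemma one_le_log_exp_one_add_sq (r : ℝ) : 1 ≤ Real.log (Real.exp 1 + r ^ 2) := by
  rw [Real.le_log_iff_exp_le (by positivity)]
  nlinarith

lemma Wfn_nonneg (hρ : 0 ≤ ρ) : 0 ≤ Wfn d α ρ := by
  have := one_le_log_exp_one_add_sq ρ
  unfold Wfn
  positivity

lemma log_exp_one_add_sq_le (hρ : 0 ≤ ρ) : Real.log (Real.exp 1 + ρ ^ 2) ≤ 1 + 2 * ρ := by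
  have hle : Real.exp 1 + ρ ^ 2 ≤ Real.exp 1 * (1 + ρ) ^ 2 := by
    nlinarith [Real.add_one_le_exp 1]
  calc Real.log (Real.exp 1 + ρ ^ 2) ≤ Real.log (Real.exp 1 * (1 + ρ) ^ 2) :=
        Real.log_le_log (by positivity) hle
    _ = 1 + 2 * Real.log (1 + ρ) := by
        rw [Real.log_mul (by positivity) (by positivity), Real.log_exp, Real.log_pow]
        push_cast; ring
    _ ≤ 1 + 2 * ρ := by linarith [Real.log_le_sub_one_of_pos (by linarith : 0 < 1 + ρ)]

lemma Wfn_le_three (hp : 1 ≤ (d:ℝ) + α) (hρ : 0 ≤ ρ) : Wfn d α ρ ≤ 3 := by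
  have hρp : 0 ≤ ρ ^ ((d:ℝ) + α) := by positivity
  have hlin : 1 + 2 * ρ ≤ 3 * (1 + ρ ^ ((d:ℝ) + α)) := by
    rcases le_total ρ 1 with h | h
    · linarith
    · linarith [Real.self_le_rpow_of_one_le h hp]
  rw [Wfn, div_le_iff₀ (by positivity)]
  exact (log_exp_one_add_sq_le hρ).trans hlin

lemma inv_one_add_rpow_le_Wfn {M : ℝ} (hp : 0 ≤ (d:ℝ) + α) (hρ : 0 ≤ ρ) (hρM : ρ ≤ M) :
    (1 + M ^ ((d:ℝ) + α))⁻¹ ≤ Wfn d α ρ := by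
  have hL := one_le_log_exp_one_add_sq ρ
  have hmono : ρ ^ ((d:ℝ) + α) ≤ M ^ ((d:ℝ) + α) := Real.rpow_le_rpow hρ hρM hp
  rw [Wfn, inv_eq_one_div]
  gcongr

lemma sq_div_exp_one_add_sq_div_log_le (ρ : ℝ) :
    ρ ^ 2 / (Real.exp 1 + ρ ^ 2) / Real.log (Real.exp 1 + ρ ^ 2)
      ≤ 1 / Real.log (Real.exp 1 + ρ ^ 2) := by
  have := one_le_log_exp_one_add_sq ρ
  gcongr
  rw [div_le_one (by positivity)]
  linarith [Real.exp_pos 1]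

lemma sq_div_exp_one_add_sq_div_log_le_one (ρ : ℝ) :
    ρ ^ 2 / (Real.exp 1 + ρ ^ 2) / Real.log (Real.exp 1 + ρ ^ 2) ≤ 1 := by
  have h := one_le_log_exp_one_add_sq ρ
  exact (sq_div_exp_one_add_sq_div_log_le ρ).trans (div_le_one_of_le₀ h (zero_le_one.trans h))

lemma div_one_add_self_le_one {x : ℝ} (hx : 0 ≤ x) : x / (1 + x) ≤ 1 :=
  div_le_one_of_le₀ (by linarith) (by positivity)

end Wfn

lemma rpow_neg_one_div_mul_rpow {t r : ℝ} (ht : 0 < t) (hr : 0 ≤ r) (α q : ℝ) :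
    (t ^ (-(1:ℝ)/α) * r) ^ q = r ^ q * t ^ (-q/α) := by
  rw [Real.mul_rpow (by positivity) hr, ← Real.rpow_mul ht.le, mul_comm]
  ring_nf

noncomputable def wfnElasticity (d : ℕ) (α β s σ ρ : ℝ) : ℝ :=
  -(1:ℝ)/β - s/α * (σ / (1 + σ))
    - 2/α * (ρ ^ 2 / (Real.exp 1 + ρ ^ 2)) / Real.log (Real.exp 1 + ρ ^ 2)
    + ((d:ℝ) + α)/α * (ρ ^ ((d:ℝ) + α) / (1 + ρ ^ ((d:ℝ) + α)))

lemma hasElasticityAt_wfn (d : ℕ) {α β s t : ℝ} (ht : 0 < t)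
    (z : EuclideanSpace ℝ (Fin d)) :
    HasElasticityAt (fun τ => wfn d α β s τ z)
      (wfnElasticity d α β s (t ^ (-s/α)) (t ^ (-(1:ℝ)/α) * ‖z‖)) t := by
  -- Moving the powers of `τ` off `‖z‖` makes every factor differentiable, also at `z = 0`.
  have hsq : ∀ τ > 0, (τ ^ (-(1:ℝ)/α) * ‖z‖) ^ 2 = ‖z‖ ^ 2 * τ ^ (-2/α) := fun τ hτ => by
    exact_mod_cast rpow_neg_one_div_mul_rpow hτ (norm_nonneg z) α 2
  have hpow : ∀ τ > 0, (τ ^ (-(1:ℝ)/α) * ‖z‖) ^ ((d:ℝ) + α)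
      = ‖z‖ ^ ((d:ℝ) + α) * τ ^ (-((d:ℝ) + α)/α) :=
    fun τ hτ => rpow_neg_one_div_mul_rpow hτ (norm_nonneg z) α _
  have hform : (fun τ => wfn d α β s τ z) =ᶠ[𝓝 t] fun τ =>
      τ ^ (-(1:ℝ)/β) * (1 + 1 * τ ^ (-s/α)) * Real.log (Real.exp 1 + ‖z‖ ^ 2 * τ ^ (-2/α))
        * (1 + ‖z‖ ^ ((d:ℝ) + α) * τ ^ (-((d:ℝ) + α)/α))⁻¹ := by
    filter_upwards [Ioi_mem_nhds ht] with τ hτ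
    rw [wfn, Wfn, hsq τ hτ, hpow τ hτ]
    ring
  have hlog := one_le_log_exp_one_add_sq (t ^ (-(1:ℝ)/α) * ‖z‖)
  rw [hsq t ht] at hlog
  refine HasElasticityAt.congr_of_eventuallyEq ?_ hform
  convert (((hasElasticityAt_rpow ht (-(1:ℝ)/β)).mul
      (hasElasticityAt_const_add_mul_rpow (a := 1) (b := 1) ht (-s/α) (by positivity))).mul
      ((hasElasticityAt_const_add_mul_rpow (a := Real.exp 1) (b := ‖z‖ ^ 2) ht (-2/α)
        (by positivity)).log (by positivity) (by linarith))).mul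
    ((hasElasticityAt_const_add_mul_rpow (a := 1) (b := ‖z‖ ^ ((d:ℝ) + α)) ht
      (-((d:ℝ) + α)/α) (by positivity)).inv (by positivity)) using 1
  rw [wfnElasticity, hsq t ht, hpow t ht]
  ring

section wfnElasticity

variable {d : ℕ} {α β s σ ρ : ℝ}

lemma neg_le_wfnElasticity (hα : 0 < α) (hs : 0 ≤ s) (hσ : 0 ≤ σ) (hρ : 0 ≤ ρ) :
    -(1/β + s/α + 2/α) ≤ wfnElasticity d α β s σ ρ := by
  have h₁ : s/α * (σ / (1 + σ)) ≤ s/α :=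
    mul_le_of_le_one_right (by positivity) (div_one_add_self_le_one hσ)
  have h₂ : 2/α * (ρ ^ 2 / (Real.exp 1 + ρ ^ 2)) / Real.log (Real.exp 1 + ρ ^ 2) ≤ 2/α := by
    rw [mul_div_assoc]
    exact mul_le_of_le_one_right (by positivity) (sq_div_exp_one_add_sq_div_log_le_one ρ)
  have h₃ : 0 ≤ ((d:ℝ) + α)/α * (ρ ^ ((d:ℝ) + α) / (1 + ρ ^ ((d:ℝ) + α))) := by positivity
  rw [wfnElasticity]
  linarith [neg_div β 1]

lemma wfnElasticity_le (hα : 0 < α) (hs : 0 ≤ s) (hσ : 0 ≤ σ) (hρ : 0 ≤ ρ) :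
    wfnElasticity d α β s σ ρ ≤ -(1/β) + ((d:ℝ) + α)/α := by
  have h₁ : 0 ≤ s/α * (σ / (1 + σ)) := by positivity
  have h₂ : 0 ≤ 2/α * (ρ ^ 2 / (Real.exp 1 + ρ ^ 2)) / Real.log (Real.exp 1 + ρ ^ 2) := by
    have := one_le_log_exp_one_add_sq ρ
    positivity
  have h₃ : ((d:ℝ) + α)/α * (ρ ^ ((d:ℝ) + α) / (1 + ρ ^ ((d:ℝ) + α))) ≤ ((d:ℝ) + α)/α :=
    mul_le_of_le_one_right (by positivity) (div_one_add_self_le_one (by positivity))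
  rw [wfnElasticity]
  linarith [neg_div β 1]

lemma abs_wfnElasticity_le (hα : 0 < α) (hβ : 0 < β) (hs : 0 ≤ s) (hσ : 0 ≤ σ) (hρ : 0 ≤ ρ) :
    |wfnElasticity d α β s σ ρ| ≤ 1/β + s/α + 2/α + ((d:ℝ) + α)/α := by
  have := neg_le_wfnElasticity (d := d) (β := β) hα hs hσ hρ
  have := wfnElasticity_le (d := d) (β := β) hα hs hσ hρ
  have : 0 ≤ s/α + 2/α := by positivity
  have : 0 ≤ ((d:ℝ) + α)/α := by positivity
  rw [abs_le]
  constructor <;> linarith [one_div_pos.mpr hβ]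

lemma sub_le_wfnElasticity (hα : 0 < α) (hs : 0 ≤ s) (hσ : 0 ≤ σ) (hρ : 0 ≤ ρ) :
    ((d:ℝ) + α)/α - 1/β - s/α - 2/α / Real.log (Real.exp 1 + ρ ^ 2)
        - ((d:ℝ) + α)/α / (1 + ρ ^ ((d:ℝ) + α)) ≤ wfnElasticity d α β s σ ρ := by
  have h₁ : s/α * (σ / (1 + σ)) ≤ s/α :=
    mul_le_of_le_one_right (by positivity) (div_one_add_self_le_one hσ)
  have h₂ : 2/α * (ρ ^ 2 / (Real.exp 1 + ρ ^ 2)) / Real.log (Real.exp 1 + ρ ^ 2)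
      ≤ 2/α / Real.log (Real.exp 1 + ρ ^ 2) := by
    rw [mul_div_assoc, div_eq_mul_one_div (2/α)]
    exact mul_le_mul_of_nonneg_left (sq_div_exp_one_add_sq_div_log_le ρ) (by positivity)
  have h₃ : ρ ^ ((d:ℝ) + α) / (1 + ρ ^ ((d:ℝ) + α)) = 1 - 1 / (1 + ρ ^ ((d:ℝ) + α)) := by
    have : 0 < 1 + ρ ^ ((d:ℝ) + α) := by positivity
    field_simp
    ring
  rw [wfnElasticity, h₃]
  have : ((d:ℝ) + α)/α / (1 + ρ ^ ((d:ℝ) + α)) = ((d:ℝ) + α)/α * (1 / (1 + ρ ^ ((d:ℝ) + α))) := by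
    ring
  linarith [neg_div β 1]

lemma eventually_div_one_add_rpow_le_Wfn_mul_wfnElasticity {c₁ : ℝ} (hα : 0 < α) (hs : 0 ≤ s)
    (hδ : 1/β + s/α < ((d:ℝ) + α)/α) :
    ∀ᶠ ρ in atTop, ∀ σ ≥ 0,
      c₁ / (1 + ρ ^ ((d:ℝ) + α)) ≤ Wfn d α ρ * wfnElasticity d α β s σ ρ := by
  have hp : 0 < (d:ℝ) + α := by positivity
  have hlog : Tendsto (fun ρ : ℝ => Real.log (Real.exp 1 + ρ ^ 2)) atTop atTop :=
    Real.tendsto_log_atTop.comp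
      (tendsto_atTop_add_const_left _ _ (tendsto_pow_atTop two_ne_zero))
  have hpow : Tendsto (fun ρ : ℝ => 1 + ρ ^ ((d:ℝ) + α)) atTop atTop :=
    tendsto_atTop_add_const_left _ _ (tendsto_rpow_atTop hp)
  have hsmall : Tendsto (fun ρ : ℝ => (2/α + c₁) / Real.log (Real.exp 1 + ρ ^ 2)
      + ((d:ℝ) + α)/α / (1 + ρ ^ ((d:ℝ) + α))) atTop (𝓝 0) := by
    simpa using (tendsto_const_nhds.div_atTop hlog).add (tendsto_const_nhds.div_atTop hpow)
  filter_upwards [hsmall.eventually (gt_mem_nhds (sub_pos.mpr hδ)), eventually_ge_atTop 0]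
    with ρ hρsmall hρ σ hσ
  have hL := one_le_log_exp_one_add_sq ρ
  have hE := sub_le_wfnElasticity (d := d) (β := β) hα hs hσ hρ
  have hc₁E : c₁ / Real.log (Real.exp 1 + ρ ^ 2) ≤ wfnElasticity d α β s σ ρ := by
    rw [add_div] at hρsmall
    linarith
  calc c₁ / (1 + ρ ^ ((d:ℝ) + α))
      = Wfn d α ρ * (c₁ / Real.log (Real.exp 1 + ρ ^ 2)) := by
        rw [Wfn]; field_simp
    _ ≤ Wfn d α ρ * wfnElasticity d α β s σ ρ :=
        mul_le_mul_of_nonneg_left hc₁E (Wfn_nonneg hρ)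

end wfnElasticity

section Integral

variable {d : ℕ} {α β s : ℝ}

lemma wfn_nonneg {τ : ℝ} (hτ : 0 < τ) (z : EuclideanSpace ℝ (Fin d)) :
    0 ≤ wfn d α β s τ z := by
  have := Wfn_nonneg (d := d) (α := α) (by positivity : 0 ≤ τ ^ (-(1:ℝ)/α) * ‖z‖)
  unfold wfn
  positivity

lemma wfn_le (hp : 1 ≤ (d:ℝ) + α) {τ : ℝ} (hτ : 0 < τ) (z : EuclideanSpace ℝ (Fin d)) :
    wfn d α β s τ z ≤ τ ^ (-(1:ℝ)/β) * (1 + τ ^ (-s/α)) * 3 :=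
  mul_le_mul_of_nonneg_left (Wfn_le_three hp (by positivity)) (by positivity)

lemma abs_inv_mul_wfn_mul_wfnElasticity_le (hp : 1 ≤ (d:ℝ) + α) (hα : 0 < α) (hβ : 0 < β)
    (hs : 0 ≤ s) {t τ : ℝ} (ht : 0 < t) (hτ : t ≤ τ) (z : EuclideanSpace ℝ (Fin d)) :
    |τ⁻¹ * wfn d α β s τ z * wfnElasticity d α β s (τ ^ (-s/α)) (τ ^ (-(1:ℝ)/α) * ‖z‖)|
      ≤ t⁻¹ * (t ^ (-(1:ℝ)/β) * (1 + t ^ (-s/α)) * 3)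
        * (1/β + s/α + 2/α + ((d:ℝ) + α)/α) := by
  have hτ0 : 0 < τ := ht.trans_le hτ
  have hwfn : wfn d α β s τ z ≤ t ^ (-(1:ℝ)/β) * (1 + t ^ (-s/α)) * 3 := by
    refine (wfn_le hp hτ0 z).trans ?_
    have hβ' : -(1:ℝ)/β ≤ 0 := div_nonpos_of_nonpos_of_nonneg (by norm_num) hβ.le
    have hs' : -s/α ≤ 0 := div_nonpos_of_nonpos_of_nonneg (by linarith) hα.le
    gcongr ?_ * (1 + ?_) * 3
    · exact Real.rpow_le_rpow_of_nonpos ht hτ hβ'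
    · exact Real.rpow_le_rpow_of_nonpos ht hτ hs'
  rw [abs_mul, abs_mul, abs_of_pos (inv_pos.mpr hτ0), abs_of_nonneg (wfn_nonneg hτ0 z)]
  have hE := abs_wfnElasticity_le (d := d) (β := β) hα hβ hs (σ := τ ^ (-s/α))
    (ρ := τ ^ (-(1:ℝ)/α) * ‖z‖) (by positivity) (by positivity)
  gcongr
  exact wfn_nonneg hτ0 z

lemma hasDerivAt_integral_wfn (μ : Measure (EuclideanSpace ℝ (Fin d))) [IsFiniteMeasure μ]
    (hp : 1 ≤ (d:ℝ) + α) (hα : 0 < α) (hβ : 0 < β) (hs : 0 ≤ s) {t : ℝ} (ht : 0 < t)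
    (x : EuclideanSpace ℝ (Fin d)) :
    Integrable (fun y => t⁻¹ * wfn d α β s t (x - y)
      * wfnElasticity d α β s (t ^ (-s/α)) (t ^ (-(1:ℝ)/α) * ‖x - y‖)) μ ∧
    HasDerivAt (fun τ => ∫ y, wfn d α β s τ (x - y) ∂μ)
      (∫ y, t⁻¹ * wfn d α β s t (x - y)
        * wfnElasticity d α β s (t ^ (-s/α)) (t ^ (-(1:ℝ)/α) * ‖x - y‖) ∂μ) t := by
  have hmeas : ∀ τ, AEStronglyMeasurable (fun y => wfn d α β s τ (x - y)) μ := fun τ =>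
    Measurable.aestronglyMeasurable (by unfold wfn Wfn; fun_prop)
  refine hasDerivAt_integral_of_dominated_loc_of_deriv_le (Ioi_mem_nhds (half_lt_self ht))
    (.of_forall hmeas) ?_ ?_ (.of_forall fun y τ hτ =>
      abs_inv_mul_wfn_mul_wfnElasticity_le hp hα hβ hs (half_pos ht) (le_of_lt hτ) (x - y))
    (integrable_const _) (.of_forall fun y τ hτ =>
      hasElasticityAt_wfn d ((half_pos ht).trans hτ) (x - y))
  · refine .of_bound (hmeas t) (t ^ (-(1:ℝ)/β) * (1 + t ^ (-s/α)) * 3) (.of_forall fun y => ?_)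
    rw [Real.norm_eq_abs, abs_of_nonneg (wfn_nonneg ht _)]
    exact wfn_le hp ht _
  · exact Measurable.aestronglyMeasurable (by unfold wfn Wfn wfnElasticity; fun_prop)

end Integral

-- Bounding `f - max g 0` rather than `f - g` keeps the conclusion true when `g` is not
-- integrable, where `∫ g` is the junk value `0`.
lemma integral_le_integral_sub_integral {X : Type*} [MeasurableSpace X] {μ : Measure X}
    {f g φ : X → ℝ} (hf : Integrable f μ) (hφ : Integrable φ μ)
    (h : ∀ x, φ x ≤ f x - max (g x) 0) :
    ∫ x, φ x ∂μ ≤ ∫ x, f x ∂μ - ∫ x, g x ∂μ := by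
  by_cases hg : Integrable g μ
  · rw [← integral_sub hf hg]
    exact integral_mono hφ (hf.sub hg) fun x => (h x).trans (by linarith [le_max_left (g x) 0])
  · rw [integral_undef hg, sub_zero]
    exact integral_mono hφ hf fun x => (h x).trans (by simp)

lemma neg_ite_le_Wfn_mul_wfnElasticity_sub {E : Type*} [NormedAddCommGroup E] {d : ℕ}
    {α β s c₁ R₀ C₂ σ : ℝ} {D : E → ℝ} (hp : 1 ≤ (d:ℝ) + α) (hα : 0 < α) (hβ : 0 < β)
    (hs : 0 ≤ s) (hc₁ : 0 ≤ c₁) (hσ : 0 ≤ σ) (hR₀ : 2 ≤ R₀)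
    (hfar : ∀ ρ ≥ R₀, c₁ / (1 + ρ ^ ((d:ℝ) + α)) ≤ Wfn d α ρ * wfnElasticity d α β s σ ρ)
    (hnear : ∀ u, ‖u‖ ≤ R₀ → |D u| ≤ C₂)
    (hdecay : ∀ u, 2 ≤ ‖u‖ → D u ≤ c₁ / (1 + ‖u‖ ^ ((d:ℝ) + α))) (u : E) :
    -(if ‖u‖ ≤ R₀ then 3 * (1/β + s/α + 2/α) + C₂ else 0)
      ≤ Wfn d α ‖u‖ * wfnElasticity d α β s σ ‖u‖ - max (D u) 0 := by
  split_ifs with hu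
  · have hW := Wfn_le_three hp (norm_nonneg u)
    have hW0 := Wfn_nonneg (d := d) (α := α) (norm_nonneg u)
    have hE := neg_le_wfnElasticity (d := d) (β := β) hα hs hσ (norm_nonneg u)
    have hK : 0 ≤ 1/β + s/α + 2/α := by positivity
    have hWE : -(3 * (1/β + s/α + 2/α)) ≤ Wfn d α ‖u‖ * wfnElasticity d α β s σ ‖u‖ := by
      nlinarith
    have hD := (le_abs_self _).trans (hnear u hu)
    have : max (D u) 0 ≤ C₂ := max_le hD ((abs_nonneg _).trans (hnear u hu))
    linarith
  · have hfar' := hfar ‖u‖ (le_of_not_ge hu)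
    have hD := hdecay u (hR₀.trans (le_of_not_ge hu))
    have : 0 ≤ c₁ / (1 + ‖u‖ ^ ((d:ℝ) + α)) := by positivity
    have : max (D u) 0 ≤ c₁ / (1 + ‖u‖ ^ ((d:ℝ) + α)) := max_le hD this
    linarith

lemma neg_mul_measureReal_le_integral_sub_integral {d : ℕ} {α β s c₁ R₀ C₂ t : ℝ}
    (μ : Measure (EuclideanSpace ℝ (Fin d))) [IsFiniteMeasure μ]
    {D : EuclideanSpace ℝ (Fin d) → ℝ} (hp : 1 ≤ (d:ℝ) + α) (hα : 0 < α) (hβ : 0 < β)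
    (hs : 0 ≤ s) (hc₁ : 0 ≤ c₁) (hR₀ : 2 ≤ R₀)
    (hfar : ∀ ρ ≥ R₀, ∀ σ ≥ 0,
      c₁ / (1 + ρ ^ ((d:ℝ) + α)) ≤ Wfn d α ρ * wfnElasticity d α β s σ ρ)
    (hnear : ∀ u, ‖u‖ ≤ R₀ → |D u| ≤ C₂)
    (hdecay : ∀ u, 2 ≤ ‖u‖ → D u ≤ c₁ / (1 + ‖u‖ ^ ((d:ℝ) + α))) (ht : 0 < t)
    (x : EuclideanSpace ℝ (Fin d))
    (hint : Integrable (fun y => t⁻¹ * wfn d α β s t (x - y)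
      * wfnElasticity d α β s (t ^ (-s/α)) (t ^ (-(1:ℝ)/α) * ‖x - y‖)) μ) :
    -(t⁻¹ * (t ^ (-(1:ℝ)/β) * (1 + t ^ (-s/α))) * (3 * (1/β + s/α + 2/α) + C₂))
        * μ.real {y | t ^ (-(1:ℝ)/α) * ‖x - y‖ ≤ R₀}
      ≤ (∫ y, t⁻¹ * wfn d α β s t (x - y)
          * wfnElasticity d α β s (t ^ (-s/α)) (t ^ (-(1:ℝ)/α) * ‖x - y‖) ∂μ)
        - t⁻¹ * (t ^ (-(1:ℝ)/β) * (1 + t ^ (-s/α))) * ∫ y, D (t ^ (-(1:ℝ)/α) • (x - y)) ∂μ := by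
  set a := t⁻¹ * (t ^ (-(1:ℝ)/β) * (1 + t ^ (-s/α)))
  set c := t ^ (-(1:ℝ)/α)
  set C := 3 * (1/β + s/α + 2/α) + C₂
  set N := {y | c * ‖x - y‖ ≤ R₀}
  have ha : 0 ≤ a := by positivity
  have hc : 0 ≤ c := by positivity
  have hN : MeasurableSet N := measurableSet_le (by fun_prop) measurable_const
  have key := integral_le_integral_sub_integral (g := fun y => a * D (c • (x - y))) hint
    ((integrable_const (-(a * C))).indicator hN) fun y => by
      have hy := neg_ite_le_Wfn_mul_wfnElasticity_sub hp hα hβ hs hc₁ (by positivity) hR₀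
        (fun ρ hρ => hfar ρ hρ (t ^ (-s/α)) (by positivity)) hnear hdecay (c • (x - y))
      rw [norm_smul_of_nonneg hc] at hy
      have hmax : max (a * D (c • (x - y))) 0 = a * max (D (c • (x - y))) 0 := by
        rw [mul_max_of_nonneg _ _ ha, mul_zero]
      rw [Set.indicator_apply, hmax]
      simp only [N, mem_ofPred_eq]
      calc (if c * ‖x - y‖ ≤ R₀ then -(a * C) else 0)
          = a * -(if c * ‖x - y‖ ≤ R₀ then C else 0) := by split_ifs <;> ring
        _ ≤ a * (Wfn d α (c * ‖x - y‖) * wfnElasticity d α β s (t ^ (-s/α)) (c * ‖x - y‖)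
            - max (D (c • (x - y))) 0) := mul_le_mul_of_nonneg_left hy ha
        _ = _ := by simp only [a, wfn]; ring
  rw [integral_indicator_const _ hN, integral_const_mul, smul_eq_mul] at key
  linarith

section Mass

variable {d : ℕ} {α : ℝ} (μ : Measure (EuclideanSpace ℝ (Fin d))) [IsFiniteMeasure μ]

lemma integrable_Wfn (hp : 1 ≤ (d:ℝ) + α) {c : ℝ} (hc : 0 ≤ c) (x : EuclideanSpace ℝ (Fin d)) :
    Integrable (fun y => Wfn d α (c * ‖x - y‖)) μ := by
  refine .of_bound (Measurable.aestronglyMeasurable (by unfold Wfn; fun_prop)) 3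
    (.of_forall fun y => ?_)
  rw [Real.norm_eq_abs, abs_of_nonneg (Wfn_nonneg (by positivity))]
  exact Wfn_le_three hp (by positivity)

lemma inv_one_add_rpow_mul_measureReal_le_integral_Wfn (hp : 1 ≤ (d:ℝ) + α) {c R : ℝ}
    (hc : 0 ≤ c) (x : EuclideanSpace ℝ (Fin d)) {B : Set (EuclideanSpace ℝ (Fin d))}
    (hB : MeasurableSet B) (hBR : ∀ y ∈ B, c * ‖x - y‖ ≤ R) :
    (1 + R ^ ((d:ℝ) + α))⁻¹ * μ.real B ≤ ∫ y, Wfn d α (c * ‖x - y‖) ∂μ :=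
  (setIntegral_ge_of_const_le_real hB (measure_ne_top μ B)
    (fun y hy => inv_one_add_rpow_le_Wfn (by linarith) (by positivity) (hBR y hy))
    (integrable_Wfn μ hp hc x).integrableOn).trans
  (setIntegral_le_integral (integrable_Wfn μ hp hc x)
    (.of_forall fun y => Wfn_nonneg (by positivity)))

end Mass

lemma one_le_one_add_rpow_mul_min_rpow {α s t : ℝ} (hα : 0 < α) (ht : 0 < t) :
    1 ≤ (1 + t ^ (-s/α)) * (min (t ^ (1/α)) 1) ^ s := by
  rcases le_total t 1 with h | h
  · rw [min_eq_left (Real.rpow_le_one ht.le h (by positivity)), ← Real.rpow_mul ht.le,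
      add_mul, ← Real.rpow_add ht]
    have : 0 ≤ t ^ (1/α * s) := by positivity
    rw [show -s/α + 1/α * s = 0 by ring, Real.rpow_zero]
    linarith
  · rw [min_eq_right (Real.one_le_rpow h (by positivity)), Real.one_rpow, mul_one]
    have : 0 ≤ t ^ (-s/α) := by positivity
    linarith

lemma mul_inv_le_one_add_rpow_mul_integral_Wfn {d : ℕ} {α s Cund R₀ t : ℝ}
    (μ : Measure (EuclideanSpace ℝ (Fin d))) [IsFiniteMeasure μ]
    {S : Set (EuclideanSpace ℝ (Fin d))} (hp : 1 ≤ (d:ℝ) + α) (hα : 0 < α)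
    (hCund : 0 ≤ Cund) (hsupp : μ Sᶜ = 0) (hF2 : IsF2 d μ S Cund s) (ht : 0 < t)
    (x : EuclideanSpace ℝ (Fin d))
    (hN : μ {y | t ^ (-(1:ℝ)/α) * ‖x - y‖ ≤ R₀} ≠ 0) :
    Cund * (1 + (R₀ + 1) ^ ((d:ℝ) + α))⁻¹
      ≤ (1 + t ^ (-s/α)) * ∫ y, Wfn d α (t ^ (-(1:ℝ)/α) * ‖x - y‖) ∂μ := by
  set c := t ^ (-(1:ℝ)/α)
  set r := min (t ^ (1/α)) 1
  obtain ⟨z, hzN, hzS⟩ := not_subset.1 fun h => hN (measure_mono_null h hsupp)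
  rw [mem_compl_iff, not_not] at hzS
  have hr : 0 < r := lt_min (by positivity) one_pos
  have hcr : c * r ≤ 1 := by
    calc c * r ≤ c * t ^ (1/α) := mul_le_mul_of_nonneg_left (min_le_left _ _) (by positivity)
      _ = 1 := by rw [← Real.rpow_add ht, neg_div, neg_add_cancel, Real.rpow_zero]
  have hball : ∀ y ∈ closedBall z r, c * ‖x - y‖ ≤ R₀ + 1 := fun y hy => by
    have hxy : ‖x - y‖ ≤ ‖x - z‖ + r := by
      rw [← dist_eq_norm, ← dist_eq_norm]
      exact (dist_triangle x z y).trans (by rw [dist_comm z y]; linarith [mem_closedBall.1 hy])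
    have hzN' : c * ‖x - z‖ ≤ R₀ := hzN
    nlinarith [mul_le_mul_of_nonneg_left hxy (by positivity : 0 ≤ c)]
  have hw : 0 < (1 + (R₀ + 1) ^ ((d:ℝ) + α))⁻¹ := by
    have hR₀ : 0 ≤ R₀ + 1 := by linarith [(by positivity : 0 ≤ c * ‖x - z‖).trans hzN]
    have := Real.rpow_nonneg hR₀ ((d:ℝ) + α)
    positivity
  have hmass : Cund * r ^ s ≤ μ.real (closedBall z r) :=
    (ENNReal.ofReal_le_iff_le_toReal (measure_ne_top μ _)).1 (hF2 z hzS r hr (min_le_right _ _))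
  have hW := inv_one_add_rpow_mul_measureReal_le_integral_Wfn μ hp (by positivity) x
    measurableSet_closedBall hball
  calc Cund * (1 + (R₀ + 1) ^ ((d:ℝ) + α))⁻¹
      ≤ Cund * (1 + (R₀ + 1) ^ ((d:ℝ) + α))⁻¹ * ((1 + t ^ (-s/α)) * r ^ s) :=
        le_mul_of_one_le_right (by positivity) (one_le_one_add_rpow_mul_min_rpow hα ht)
    _ = (1 + t ^ (-s/α)) * ((1 + (R₀ + 1) ^ ((d:ℝ) + α))⁻¹ * (Cund * r ^ s)) := by ring
    _ ≤ (1 + t ^ (-s/α)) * ∫ y, Wfn d α (c * ‖x - y‖) ∂μ := by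
        gcongr
        exact (mul_le_mul_of_nonneg_left hmass hw.le).trans hW

lemma mul_le_rpow_one_add {k t σ g w m C c β : ℝ} (hk : 0 < k) (hβ : 0 < β) (ht : 0 < t)
    (hσ : 0 ≤ σ) (hw : 0 < w) (hC : 0 ≤ C) (hc : 0 ≤ c) (hm : w * m ≤ g)
    (hg : c ≤ (1 + σ) * g) (hΛ : C / w ≤ (k * c) ^ β) :
    k * (t⁻¹ * (t ^ (-(1:ℝ)/β) * (1 + σ)) * C) * m
      ≤ (k * (t ^ (-(1:ℝ)/β) * (1 + σ) * g)) ^ (1 + β) := by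
  have hg0 : 0 ≤ g := nonneg_of_mul_nonneg_right (hc.trans hg) (by linarith)
  have hX : 0 ≤ k * (t ^ (-(1:ℝ)/β) * (1 + σ) * g) := by positivity
  have hXβ : (k * (t ^ (-(1:ℝ)/β) * (1 + σ) * g)) ^ β = t⁻¹ * (k * ((1 + σ) * g)) ^ β := by
    rw [show k * (t ^ (-(1:ℝ)/β) * (1 + σ) * g) = t ^ (-(1:ℝ)/β) * (k * ((1 + σ) * g)) by ring,
      Real.mul_rpow (by positivity) (by positivity), ← Real.rpow_mul ht.le,
      div_mul_cancel₀ _ hβ.ne', Real.rpow_neg_one]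
  have hpow : C / w ≤ (k * ((1 + σ) * g)) ^ β :=
    hΛ.trans (Real.rpow_le_rpow (by positivity) (by gcongr) hβ.le)
  calc k * (t⁻¹ * (t ^ (-(1:ℝ)/β) * (1 + σ)) * C) * m
      = k * (t ^ (-(1:ℝ)/β) * (1 + σ) * (w * m)) * (t⁻¹ * (C / w)) := by
        field_simp
    _ ≤ k * (t ^ (-(1:ℝ)/β) * (1 + σ) * g) * (k * (t ^ (-(1:ℝ)/β) * (1 + σ) * g)) ^ β := by
        rw [hXβ]
        gcongr
    _ = (k * (t ^ (-(1:ℝ)/β) * (1 + σ) * g)) ^ (1 + β) := by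
        rw [Real.rpow_add' hX (by linarith), Real.rpow_one]

lemma hfn_eq_mul_integral_Wfn {d : ℕ} {α β s : ℝ} (μ : Measure (EuclideanSpace ℝ (Fin d)))
    (k t : ℝ) (x : EuclideanSpace ℝ (Fin d)) :
    hfn d α β s μ k t x
      = k * (t ^ (-(1:ℝ)/β) * (1 + t ^ (-s/α)) * ∫ y, Wfn d α (t ^ (-(1:ℝ)/α) * ‖x - y‖) ∂μ) := by
  rw [hfn, ← integral_const_mul (t ^ (-(1:ℝ)/β) * (1 + t ^ (-s/α)))]
  rfl

lemma mul_measureReal_le_hfn_rpow {d : ℕ} {α β s Cund R₀ C k t : ℝ}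
    (μ : Measure (EuclideanSpace ℝ (Fin d))) [IsFiniteMeasure μ]
    {S : Set (EuclideanSpace ℝ (Fin d))} (hp : 1 ≤ (d:ℝ) + α) (hα : 0 < α) (hβ : 0 < β)
    (hCund : 0 ≤ Cund) (hsupp : μ Sᶜ = 0) (hF2 : IsF2 d μ S Cund s) (hR₀ : 0 ≤ R₀)
    (hC : 0 ≤ C) (hk : 0 < k)
    (hΛ : C / (1 + (R₀ + 1) ^ ((d:ℝ) + α))⁻¹ ≤ (k * (Cund * (1 + (R₀ + 1) ^ ((d:ℝ) + α))⁻¹)) ^ β)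
    (ht : 0 < t) (x : EuclideanSpace ℝ (Fin d)) :
    k * (t⁻¹ * (t ^ (-(1:ℝ)/β) * (1 + t ^ (-s/α))) * C)
        * μ.real {y | t ^ (-(1:ℝ)/α) * ‖x - y‖ ≤ R₀}
      ≤ hfn d α β s μ k t x ^ (1 + β) := by
  set N := {y | t ^ (-(1:ℝ)/α) * ‖x - y‖ ≤ R₀}
  have hc : 0 ≤ t ^ (-(1:ℝ)/α) := by positivity
  rw [hfn_eq_mul_integral_Wfn]
  by_cases hN : μ N = 0
  · rw [measureReal_def, hN, ENNReal.toReal_zero, mul_zero]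
    have : 0 ≤ ∫ y, Wfn d α (t ^ (-(1:ℝ)/α) * ‖x - y‖) ∂μ :=
      integral_nonneg fun y => Wfn_nonneg (by positivity)
    positivity
  · have hw : 0 < (1 + (R₀ + 1) ^ ((d:ℝ) + α))⁻¹ := by positivity
    exact mul_le_rpow_one_add hk hβ ht (by positivity) hw hC (by positivity)
      (inv_one_add_rpow_mul_measureReal_le_integral_Wfn μ hp hc x
        (measurableSet_le (by fun_prop) measurable_const)
        fun y hy => le_add_of_le_of_nonneg hy zero_le_one)
      (mul_inv_le_one_add_rpow_mul_integral_Wfn μ hp hα hCund hsupp hF2 ht x hN) hΛ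

lemma exists_pos_forall_le_mul_rpow {β m : ℝ} (hβ : 0 < β) (hm : 0 < m) (M : ℝ) :
    ∃ Λ > 0, ∀ k ≥ Λ, M ≤ (k * m) ^ β := by
  obtain ⟨Λ, hΛ⟩ := eventually_atTop.1
    ((((tendsto_rpow_atTop hβ).comp (tendsto_id.atTop_mul_const hm)).eventually_ge_atTop M).and
      (eventually_gt_atTop 0))
  exact ⟨Λ, (hΛ Λ le_rfl).2, fun k hk => (hΛ k hk).1⟩

lemma one_div_add_div_lt_of_div_lt {a α β s : ℝ} (hα : 0 < α) (hβ : 0 < β) (hpos : 0 < a - s + α)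
    (h : α / (a - s + α) < β) : 1/β + s/α < (a + α)/α := by
  have : 1/β < (a - s + α)/α := by
    rw [div_lt_div_iff₀ hβ hα, one_mul, ← div_lt_iff₀' hpos]
    exact h
  linarith [show (a - s + α)/α = (a + α)/α - s/α by ring]

theorem stmt_10_general (d : ℕ) (hd : 0 < d) (α β s : ℝ) (hα : α ∈ Ioo (0:ℝ) 2)
    (hs : s ∈ Ico (0:ℝ) α) (hβ₁ : α / ((d:ℝ) - s + α) < β)
    (μ : Measure (EuclideanSpace ℝ (Fin d))) [IsFiniteMeasure μ]
    (S : Set (EuclideanSpace ℝ (Fin d)))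
    (hSsupp : IsSupportOf d μ S)
    (Cund : ℝ) (hCund : 0 < Cund) (hF2 : IsF2 d μ S Cund s)
    (c₁ : ℝ) (hc₁ : 0 < c₁) (D : EuclideanSpace ℝ (Fin d) → ℝ)
    (hDbdd : ∀ M : ℝ, ∃ C : ℝ, ∀ u : EuclideanSpace ℝ (Fin d), ‖u‖ ≤ M → |D u| ≤ C)
    (hDdecay : ∀ u : EuclideanSpace ℝ (Fin d), 2 ≤ ‖u‖ →
      D u ≤ c₁ / (1 + ‖u‖ ^ ((d:ℝ) + α))) :
    ∃ Λ₀ > (0:ℝ), ∀ k : ℝ, Λ₀ ≤ k → ∀ t > (0:ℝ), ∀ x : EuclideanSpace ℝ (Fin d),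
      DifferentiableAt ℝ (fun τ => hfn d α β s μ k τ x) t ∧
      0 ≤ deriv (fun τ => hfn d α β s μ k τ x) t -
            k * t ^ (-(1:ℝ)/β - 1) * (1 + t ^ (-s/α)) *
              (∫ y, D ((t ^ (-(1:ℝ)/α)) • (x - y)) ∂μ) +
          hfn d α β s μ k t x ^ (1 + β) := by
  obtain ⟨hα₀, -⟩ := hα
  obtain ⟨hs₀, hsα⟩ := hs
  have hp : 1 ≤ (d:ℝ) + α := by linarith [(Nat.one_le_cast (α := ℝ)).2 hd]
  have hβ : 0 < β := (div_pos hα₀ (by linarith)).trans hβ₁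
  obtain ⟨R₀, hR₀⟩ := eventually_atTop.1
    ((eventually_div_one_add_rpow_le_Wfn_mul_wfnElasticity (c₁ := c₁) hα₀ hs₀
      (one_div_add_div_lt_of_div_lt hα₀ hβ (by linarith) hβ₁)).and
      (eventually_ge_atTop 2))
  obtain ⟨C₂, hC₂⟩ := hDbdd R₀
  have hR₀2 : 2 ≤ R₀ := (hR₀ R₀ le_rfl).2
  have hC : 0 ≤ 3 * (1/β + s/α + 2/α) + C₂ := by
    have := (abs_nonneg _).trans (hC₂ 0 (by rw [norm_zero]; linarith))
    positivity
  obtain ⟨Λ₀, hΛ₀, hΛ⟩ := exists_pos_forall_le_mul_rpow hβ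
    (m := Cund * (1 + (R₀ + 1) ^ ((d:ℝ) + α))⁻¹) (by positivity)
    ((3 * (1/β + s/α + 2/α) + C₂) / (1 + (R₀ + 1) ^ ((d:ℝ) + α))⁻¹)
  refine ⟨Λ₀, hΛ₀, fun k hk t ht x => ?_⟩
  obtain ⟨hint, hderiv⟩ := hasDerivAt_integral_wfn μ hp hα₀ hβ hs₀ ht x
  have hderiv' : HasDerivAt (fun τ => hfn d α β s μ k τ x) _ t := hderiv.const_mul k
  refine ⟨hderiv'.differentiableAt, ?_⟩
  have hlow := neg_mul_measureReal_le_integral_sub_integral μ hp hα₀ hβ hs₀ hc₁.le hR₀2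
    (fun ρ hρ => (hR₀ ρ hρ).1) hC₂ hDdecay ht x hint
  have hup := mul_measureReal_le_hfn_rpow μ hp hα₀ hβ hCund.le hSsupp.2.1 hF2 (by linarith) hC
    (hΛ₀.trans_le hk) (hΛ k hk) ht x
  have ht' : t ^ (-(1:ℝ)/β - 1) = t⁻¹ * t ^ (-(1:ℝ)/β) := by
    rw [Real.rpow_sub ht, Real.rpow_one, div_eq_inv_mul]
  rw [hderiv'.deriv, ht']
  linarith [mul_le_mul_of_nonneg_left hlow (hΛ₀.trans_le hk).le]

/-- (Proposition 7.1(a)) For `k ≥ Λ₀`, `h_k` is a supersolution of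
`∂_t u = Δ_α u - u^{1+β}`, where the fractional Laplacian term is represented via the
function `D` (playing the role of `Δ_α V`):
`∂_t h_k(t,x) - k t^{-1/β-1}(1+t^{-s/α}) ∫ D(t^{-1/α}(x-y)) dμ(y) + h_k(t,x)^{1+β} ≥ 0`. -/
theorem stmt_10 (d : ℕ) (hd : 0 < d) (α β s : ℝ) (hα : α ∈ Ioo (0:ℝ) 2)
    (hs : s ∈ Ico (0:ℝ) α) (hβ₁ : α / ((d:ℝ) - s + α) < β) (hβ₂ : β < α / d)
    (μ : Measure (EuclideanSpace ℝ (Fin d))) [IsFiniteMeasure μ] (hμ : μ ≠ 0)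
    (S : Set (EuclideanSpace ℝ (Fin d))) (hScpt : IsCompact S)
    (hSsupp : IsSupportOf d μ S)
    (Cund : ℝ) (hCund : 0 < Cund) (hF2 : IsF2 d μ S Cund s)
    (c₁ : ℝ) (hc₁ : 0 < c₁) (D : EuclideanSpace ℝ (Fin d) → ℝ) (hDmeas : Measurable D)
    (hDbdd : ∀ M : ℝ, ∃ C : ℝ, ∀ u : EuclideanSpace ℝ (Fin d), ‖u‖ ≤ M → |D u| ≤ C)
    (hDdecay : ∀ u : EuclideanSpace ℝ (Fin d), 2 ≤ ‖u‖ →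
      D u ≤ c₁ / (1 + ‖u‖ ^ ((d:ℝ) + α))) :
    ∃ Λ₀ > (0:ℝ), ∀ k : ℝ, Λ₀ ≤ k → ∀ t > (0:ℝ), ∀ x : EuclideanSpace ℝ (Fin d),
      DifferentiableAt ℝ (fun τ => hfn d α β s μ k τ x) t ∧
      0 ≤ deriv (fun τ => hfn d α β s μ k τ x) t -
            k * t ^ (-(1:ℝ)/β - 1) * (1 + t ^ (-s/α)) *
              (∫ y, D ((t ^ (-(1:ℝ)/α)) • (x - y)) ∂μ) +
          hfn d α β s μ k t x ^ (1 + β) :=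
  stmt_10_general d hd α β s hα hs hβ₁ μ S hSsupp Cund hCund hF2 c₁ hc₁ D hDbdd hDdecay
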